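/- Information-theoretic direct product theorem (Theorem 6, abstract form). Let Ω be a finite probability space, r ≥ 1 and b natural numbers, 𝒳₁,…,𝒳ᵣ finite types, and X_i : Ω → 𝒳_i random variables that are mutually independent. Let B : Ω → Fin (2^b) be any random variable, and for 1 ≤ i ≤ r set W_i = (X₁,…,X_{i−1}, B). Let cost_i : Ω → ℝ be nonnegative random variables. Suppose f : [0,∞) → ℝ is convex and nonincreasing and that for every i and every value w of W_i occurring with positive probability, E[cost_i | W_i = w] ≥ f( D_KL( law of X_i conditioned on W_i = w ‖ law of X_i ) ). Then E[Σ_{i=1}^r cost_i] ≥ r · f(b/r). -/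

import Mathlib

open Classical

/-- Probability of an event under a finite probability mass function. -/
noncomputable def prOf {Ω : Type*} [Fintype Ω] (P : Ω → ℝ) (s : Ω → Prop) : ℝ :=
  ∑ ω, if s ω then P ω else 0

/-- Kullback–Leibler divergence in bits between two distributions on a finite type. -/
noncomputable def klBits {α : Type*} [Fintype α] (μ ν : α → ℝ) : ℝ :=
  ∑ x, μ x * Real.logb 2 (μ x / ν x)

/-! Averaging the hypothesis over the values `w` of `W i` and applying Jensen's inequality gives
`E[cost i] ≥ f (I(X i; W i))`, since the mutual information is the `W i`-average of the conditional
divergences. By the chain rule, `∑ i, I(X i; W i) = ∑ i, H(X i) + H(B) - H(X, B)`, and independence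
gives `H(X) = ∑ i, H(X i) ≤ H(X, B)`, so the total information is at most `H(B) ≤ b`. A second
application of Jensen's inequality, together with the monotonicity of `f`, turns this into
`∑ i, f (I(X i; W i)) ≥ r f(b / r)`. -/

open Finset

section Probability

variable {Ω α β : Type*} [Fintype Ω] {P : Ω → ℝ}

lemma prOf_eq_sum_filter (s : Ω → Prop) : prOf P s = ∑ ω with s ω, P ω :=
  (sum_filter s P).symm

lemma prOf_nonneg (hP0 : ∀ ω, 0 ≤ P ω) (s : Ω → Prop) : 0 ≤ prOf P s := by
  rw [prOf_eq_sum_filter]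
  exact sum_nonneg fun ω _ => hP0 ω

lemma prOf_congr {s t : Ω → Prop} (h : ∀ ω, s ω ↔ t ω) : prOf P s = prOf P t := by
  simp only [prOf, h]

lemma prOf_mono (hP0 : ∀ ω, 0 ≤ P ω) {s t : Ω → Prop} (h : ∀ ω, s ω → t ω) :
    prOf P s ≤ prOf P t := by
  simp only [prOf_eq_sum_filter]
  exact sum_le_sum_of_subset_of_nonneg (fun ω => by simpa using h ω) fun ω _ _ => hP0 ω

lemma le_prOf (hP0 : ∀ ω, 0 ≤ P ω) {s : Ω → Prop} {ω : Ω} (hω : s ω) : P ω ≤ prOf P s := by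
  rw [prOf_eq_sum_filter]
  exact single_le_sum (fun ω _ => hP0 ω) (by simpa using hω)

lemma prOf_fiber_pos (hP0 : ∀ ω, 0 ≤ P ω) (Z : Ω → α) {ω : Ω} (hω : 0 < P ω) :
    0 < prOf P fun ω' => Z ω' = Z ω :=
  hω.trans_le (le_prOf hP0 rfl)

lemma sum_prOf_mul [Fintype α] (Z : Ω → α) (g : α → ℝ) :
    ∑ v, prOf P (fun ω => Z ω = v) * g v = ∑ ω, P ω * g (Z ω) := by
  simp only [prOf_eq_sum_filter, sum_mul]
  rw [← sum_fiberwise univ Z fun ω => P ω * g (Z ω)]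
  refine sum_congr rfl fun v _ => sum_congr rfl fun ω hω => ?_
  rw [(mem_filter.1 hω).2]

lemma sum_prOf_eq_one [Fintype α] (hP1 : ∑ ω, P ω = 1) (Z : Ω → α) :
    ∑ v, prOf P (fun ω => Z ω = v) = 1 := by
  simpa [hP1] using sum_prOf_mul (P := P) Z fun _ => 1

lemma sum_prOf_and [Fintype α] (Z : Ω → α) (s : Ω → Prop) :
    ∑ v, prOf P (fun ω => Z ω = v ∧ s ω) = prOf P s := by
  simp only [prOf_eq_sum_filter]
  rw [← sum_fiberwise (univ.filter s) Z P]
  simp only [filter_filter, and_comm]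

lemma sum_sum_prOf_and_mul [Fintype α] [Fintype β] (X : Ω → α) (W : Ω → β) (g : α → β → ℝ) :
    ∑ w, ∑ x, prOf P (fun ω => X ω = x ∧ W ω = w) * g x w = ∑ ω, P ω * g (X ω) (W ω) := by
  rw [← sum_prOf_mul (fun ω => (X ω, W ω)) fun v => g v.1 v.2, Fintype.sum_prod_type, sum_comm]
  simp only [Prod.mk.injEq]

lemma sum_prOf_mul_le_of_condExp_ge [Fintype β] [DecidableEq β] (hP0 : ∀ ω, 0 ≤ P ω)
    (W : Ω → β) (c : Ω → ℝ) (g : β → ℝ)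
    (h : ∀ w, 0 < prOf P (fun ω => W ω = w) →
      (∑ ω, (if W ω = w then P ω else 0) * c ω) / prOf P (fun ω => W ω = w) ≥ g w) :
    ∑ w, prOf P (fun ω => W ω = w) * g w ≤ ∑ ω, P ω * c ω := by
  have hfiber : ∀ w, ∑ ω, (if W ω = w then P ω else 0) * c ω = ∑ ω with W ω = w, P ω * c ω := by
    intro w
    simp only [ite_mul, zero_mul, sum_filter]
  rw [← sum_fiberwise univ W fun ω => P ω * c ω]
  refine sum_le_sum fun w _ => ?_
  rw [← hfiber]
  rcases (prOf_nonneg hP0 fun ω => W ω = w).eq_or_lt with hw | hw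
  · have hP : ∀ ω, W ω = w → P ω = 0 := fun ω hω => le_antisymm (hw ▸ le_prOf hP0 hω) (hP0 ω)
    rw [← hw, zero_mul]
    exact (sum_eq_zero fun ω _ => by split_ifs with hω <;> simp [hP ω, hω]).ge
  · exact (le_div_iff₀' hw).1 (h w hw)

lemma klBits_nonneg [Fintype α] {μ ν : α → ℝ} (hμ : ∀ x, 0 ≤ μ x) (hν : ∀ x, 0 ≤ ν x)
    (hsum : ∑ x, ν x ≤ ∑ x, μ x) (habs : ∀ x, ν x = 0 → μ x = 0) : 0 ≤ klBits μ ν := by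
  have hlog2 : 0 < Real.log 2 := Real.log_pos one_lt_two
  have hterm : ∀ x, (μ x - ν x) / Real.log 2 ≤ μ x * Real.logb 2 (μ x / ν x) := by
    intro x
    rcases (hμ x).eq_or_lt with hμx | hμx
    · rw [← hμx]
      simpa [neg_div] using div_nonneg (hν x) hlog2.le
    have hνx : 0 < ν x := (hν x).lt_of_ne fun h => hμx.ne' (habs x h.symm)
    rw [Real.logb, ← mul_div_assoc]
    gcongr
    have := mul_le_mul_of_nonneg_left (Real.one_sub_inv_le_log_of_pos (div_pos hμx hνx)) hμx.le
    rwa [inv_div, mul_sub, mul_one, mul_div_cancel₀ _ hμx.ne'] at this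
  calc 0 ≤ (∑ x, μ x - ∑ x, ν x) / Real.log 2 := div_nonneg (by linarith) hlog2.le
    _ = ∑ x, (μ x - ν x) / Real.log 2 := by rw [← sum_sub_distrib, sum_div]
    _ ≤ klBits μ ν := sum_le_sum fun x _ => hterm x

end Probability

section Entropy

variable {Ω α β : Type*} [Fintype Ω] {P : Ω → ℝ}

/-- Summed over outcomes rather than values, so that the range of `Z` need not be finite. -/
noncomputable def entropy (P : Ω → ℝ) (Z : Ω → α) : ℝ :=
  -∑ ω, P ω * Real.logb 2 (prOf P fun ω' => Z ω' = Z ω)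

lemma entropy_congr {Z : Ω → α} {Z' : Ω → β} (h : ∀ ω' ω, Z ω' = Z ω ↔ Z' ω' = Z' ω) :
    entropy P Z = entropy P Z' := by
  simp only [entropy, fun ω => prOf_congr (P := P) fun ω' => h ω' ω]

lemma entropy_le_of_determines (hP0 : ∀ ω, 0 ≤ P ω) {Z : Ω → α} {Z' : Ω → β}
    (h : ∀ ω' ω, Z ω' = Z ω → Z' ω' = Z' ω) : entropy P Z' ≤ entropy P Z := by
  refine neg_le_neg (sum_le_sum fun ω _ => ?_)
  rcases (hP0 ω).eq_or_lt with hω | hω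
  · simp [← hω]
  exact mul_le_mul_of_nonneg_left (Real.logb_le_logb_of_le one_lt_two
    (prOf_fiber_pos hP0 Z hω) (prOf_mono hP0 fun ω' => h ω' ω)) hω.le

lemma entropy_eq_sum [Fintype α] (Z : Ω → α) :
    entropy P Z = -∑ v, prOf P (fun ω => Z ω = v) * Real.logb 2 (prOf P fun ω => Z ω = v) := by
  rw [entropy, sum_prOf_mul Z fun v => Real.logb 2 (prOf P fun ω => Z ω = v)]

/-- The divergence from the uniform law is `log₂ |α| - H(Z)`. -/
lemma entropy_le_logb_card [Fintype α] [Nonempty α] (hP0 : ∀ ω, 0 ≤ P ω) (hP1 : ∑ ω, P ω = 1)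
    (Z : Ω → α) : entropy P Z ≤ Real.logb 2 (Fintype.card α) := by
  set q : α → ℝ := fun v => prOf P fun ω => Z ω = v
  have hN : (0 : ℝ) < Fintype.card α := by exact_mod_cast Fintype.card_pos
  have hkl := klBits_nonneg (μ := q) (ν := fun _ => (Fintype.card α : ℝ)⁻¹)
    (fun v => prOf_nonneg hP0 _) (fun _ => by positivity)
    (by simp [q, sum_prOf_eq_one hP1 Z, hN.ne']) (fun _ h => absurd h (by positivity))
  have hterm : ∀ v, q v * Real.logb 2 (q v / (Fintype.card α : ℝ)⁻¹)
      = q v * Real.logb 2 (q v) + q v * Real.logb 2 (Fintype.card α) := by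
    intro v
    rcases eq_or_ne (q v) 0 with hv | hv
    · simp [hv]
    · rw [div_inv_eq_mul, Real.logb_mul hv hN.ne', mul_add]
  rw [klBits, sum_congr rfl fun v _ => hterm v, sum_add_distrib, ← sum_mul,
    sum_prOf_eq_one hP1 Z, one_mul] at hkl
  rw [entropy_eq_sum]
  linarith

lemma entropy_pi_eq_sum {ι : Type*} [Fintype ι] {α : ι → Type*} (hP0 : ∀ ω, 0 ≤ P ω)
    (X : ∀ i, Ω → α i)
    (hindep : ∀ x : ∀ i, α i,
      prOf P (fun ω => ∀ i, X i ω = x i) = ∏ i, prOf P (fun ω => X i ω = x i)) :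
    entropy P (fun ω i => X i ω) = ∑ i, entropy P (X i) := by
  have hterm : ∀ ω, P ω * Real.logb 2 (prOf P fun ω' => (fun i => X i ω') = fun i => X i ω)
      = ∑ i, P ω * Real.logb 2 (prOf P fun ω' => X i ω' = X i ω) := by
    intro ω
    rcases (hP0 ω).eq_or_lt with hω | hω
    · simp [← hω]
    rw [prOf_congr fun ω' => funext_iff, hindep, Real.logb, Real.log_prod
      fun i _ => (prOf_fiber_pos hP0 (X i) hω).ne', sum_div, mul_sum]
    rfl
  simp only [entropy, sum_congr rfl fun ω _ => hterm ω, sum_neg_distrib]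
  rw [sum_comm]

end Entropy

section MutualInfo

variable {Ω α β : Type*} [Fintype Ω] [Fintype α] {P : Ω → ℝ}

noncomputable def condKL (P : Ω → ℝ) (X : Ω → α) (W : Ω → β) (w : β) : ℝ :=
  klBits (fun x => prOf P (fun ω => X ω = x ∧ W ω = w) / prOf P (fun ω => W ω = w))
    (fun x => prOf P fun ω => X ω = x)

noncomputable def mutualInfo [Fintype β] (P : Ω → ℝ) (X : Ω → α) (W : Ω → β) : ℝ :=
  ∑ w, prOf P (fun ω => W ω = w) * condKL P X W w

lemma condKL_nonneg (hP0 : ∀ ω, 0 ≤ P ω) (hP1 : ∑ ω, P ω = 1) (X : Ω → α) (W : Ω → β)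
    (w : β) : 0 ≤ condKL P X W w := by
  rcases (prOf_nonneg hP0 fun ω => W ω = w).eq_or_lt with hw | hw
  · simp [condKL, klBits, ← hw]
  refine klBits_nonneg (fun x => div_nonneg (prOf_nonneg hP0 _) hw.le)
    (fun x => prOf_nonneg hP0 _) ?_ fun x hx => ?_
  · rw [← sum_div, sum_prOf_and, div_self hw.ne', sum_prOf_eq_one hP1]
  · have : prOf P (fun ω => X ω = x ∧ W ω = w) = 0 :=
      le_antisymm (hx ▸ prOf_mono hP0 fun ω h => h.1) (prOf_nonneg hP0 _)
    simp [this]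

lemma mutualInfo_nonneg [Fintype β] (hP0 : ∀ ω, 0 ≤ P ω) (hP1 : ∑ ω, P ω = 1) (X : Ω → α)
    (W : Ω → β) : 0 ≤ mutualInfo P X W :=
  sum_nonneg fun w _ => mul_nonneg (prOf_nonneg hP0 _) (condKL_nonneg hP0 hP1 X W w)

lemma prOf_mul_condKL (hP0 : ∀ ω, 0 ≤ P ω) (X : Ω → α) (W : Ω → β) (w : β) :
    prOf P (fun ω => W ω = w) * condKL P X W w
      = ∑ x, prOf P (fun ω => X ω = x ∧ W ω = w) *
          Real.logb 2 (prOf P (fun ω => X ω = x ∧ W ω = w) /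
            (prOf P (fun ω => W ω = w) * prOf P (fun ω => X ω = x))) := by
  rw [condKL, klBits, mul_sum]
  refine sum_congr rfl fun x _ => ?_
  rcases eq_or_ne (prOf P fun ω => W ω = w) 0 with hw | hw
  · have : prOf P (fun ω => X ω = x ∧ W ω = w) = 0 :=
      le_antisymm (hw ▸ prOf_mono hP0 fun ω h => h.2) (prOf_nonneg hP0 _)
    simp [hw, this]
  · rw [div_div, ← mul_assoc, mul_div_cancel₀ _ hw]

lemma mutualInfo_eq_entropy [Fintype β] (hP0 : ∀ ω, 0 ≤ P ω) (X : Ω → α) (W : Ω → β) :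
    mutualInfo P X W = entropy P X + entropy P W - entropy P fun ω => (X ω, W ω) := by
  have hterm : ∀ ω, P ω * Real.logb 2 (prOf P (fun ω' => X ω' = X ω ∧ W ω' = W ω) /
        ((prOf P fun ω' => W ω' = W ω) * prOf P fun ω' => X ω' = X ω))
      = P ω * Real.logb 2 (prOf P fun ω' => (X ω', W ω') = (X ω, W ω))
        - P ω * Real.logb 2 (prOf P fun ω' => W ω' = W ω)
        - P ω * Real.logb 2 (prOf P fun ω' => X ω' = X ω) := by
    intro ω
    rcases (hP0 ω).eq_or_lt with hω | hω
    · simp [← hω]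
    have hXW := prOf_fiber_pos hP0 (fun ω => (X ω, W ω)) hω
    have hW := (prOf_fiber_pos hP0 W hω).ne'
    have hX := (prOf_fiber_pos hP0 X hω).ne'
    simp only [Prod.mk.injEq] at hXW ⊢
    rw [Real.logb_div hXW.ne' (mul_ne_zero hW hX), Real.logb_mul hW hX]
    ring
  rw [mutualInfo, sum_congr rfl fun w _ => prOf_mul_condKL hP0 X W w, sum_sum_prOf_and_mul,
    sum_congr rfl fun ω _ => hterm ω]
  simp only [entropy, sum_sub_distrib]
  ring

lemma map_mutualInfo_le [Fintype β] [DecidableEq β] {f : ℝ → ℝ} (hP0 : ∀ ω, 0 ≤ P ω)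
    (hP1 : ∑ ω, P ω = 1) (hconv : ConvexOn ℝ (Set.Ici 0) f) (X : Ω → α) (W : Ω → β) (c : Ω → ℝ)
    (h : ∀ w, 0 < prOf P (fun ω => W ω = w) →
      (∑ ω, (if W ω = w then P ω else 0) * c ω) / prOf P (fun ω => W ω = w)
        ≥ f (condKL P X W w)) :
    f (mutualInfo P X W) ≤ ∑ ω, P ω * c ω :=
  calc f (mutualInfo P X W)
      ≤ ∑ w, prOf P (fun ω => W ω = w) * f (condKL P X W w) :=
        hconv.map_sum_le (fun _ _ => prOf_nonneg hP0 _) (sum_prOf_eq_one hP1 W)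
          fun w _ => condKL_nonneg hP0 hP1 X W w
    _ ≤ ∑ ω, P ω * c ω := sum_prOf_mul_le_of_condExp_ge hP0 W c _ h

end MutualInfo

section ChainRule

variable {Ω β : Type*} [Fintype Ω] {P : Ω → ℝ} {r : ℕ} {𝒳 : Fin r → Type*}

/-- Indexed by `k : ℕ` rather than `Fin r`, so that the chain rule telescopes over `range r`. -/
def prefixVar (X : ∀ i, Ω → 𝒳 i) (B : Ω → β) (k : ℕ) (ω : Ω) :
    ((j : {j : Fin r // (j : ℕ) < k}) → 𝒳 j.1) × β :=
  (fun j => X j.1 ω, B ω)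

variable (X : ∀ i, Ω → 𝒳 i) (B : Ω → β)

lemma entropy_prefixVar_zero : entropy P (prefixVar X B 0) = entropy P B :=
  entropy_congr fun ω' ω => by simp [prefixVar, funext_iff]

lemma entropy_prefixVar_of_lt (i : Fin r) :
    entropy P (fun ω => ((fun j : {j : Fin r // j < i} => X j.1 ω), B ω))
      = entropy P (prefixVar X B i) :=
  entropy_congr fun ω' ω => by simp [prefixVar, funext_iff]

lemma entropy_prefixVar_succ (i : Fin r) :
    entropy P (fun ω => (X i ω, ((fun j : {j : Fin r // j < i} => X j.1 ω), B ω)))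
      = entropy P (prefixVar X B (i + 1)) :=
  entropy_congr fun ω' ω => by
    simp only [prefixVar, Prod.mk.injEq, funext_iff, Subtype.forall, Nat.lt_succ_iff,
      Nat.le_iff_lt_or_eq, Fin.val_fin_lt, Fin.val_inj, or_imp, forall_and, forall_eq]
    tauto

lemma entropy_pi_le_prefixVar_top (hP0 : ∀ ω, 0 ≤ P ω) :
    entropy P (fun ω j => X j ω) ≤ entropy P (prefixVar X B r) :=
  entropy_le_of_determines hP0 fun ω' ω h => funext fun j => by
    simp only [prefixVar, Prod.mk.injEq, funext_iff] at h
    exact h.1 ⟨j, j.isLt⟩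

lemma sum_mutualInfo_le_entropy [∀ i, Fintype (𝒳 i)] [Fintype β] (hP0 : ∀ ω, 0 ≤ P ω)
    (hindep : ∀ x : ∀ i, 𝒳 i,
      prOf P (fun ω => ∀ i, X i ω = x i) = ∏ i, prOf P (fun ω => X i ω = x i)) :
    ∑ i, mutualInfo P (X i) (fun ω => ((fun j : {j : Fin r // j < i} => X j.1 ω), B ω))
      ≤ entropy P B := by
  have htelescope : ∑ i : Fin r, (entropy P (prefixVar X B i) - entropy P (prefixVar X B (i + 1)))
      = entropy P B - entropy P (prefixVar X B r) := by
    rw [Fin.sum_univ_eq_sum_range (fun k => entropy P (prefixVar X B k)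
      - entropy P (prefixVar X B (k + 1))), sum_range_sub', entropy_prefixVar_zero]
  have hXB := entropy_pi_le_prefixVar_top X B hP0
  rw [entropy_pi_eq_sum hP0 X hindep] at hXB
  simp only [mutualInfo_eq_entropy hP0, entropy_prefixVar_of_lt, entropy_prefixVar_succ,
    add_sub_assoc, sum_add_distrib, htelescope]
  linarith

end ChainRule

lemma card_mul_le_sum_of_convexOn_of_antitoneOn {ι : Type*} {s : Finset ι} {f : ℝ → ℝ}
    (hconv : ConvexOn ℝ (Set.Ici 0) f) (hanti : AntitoneOn f (Set.Ici 0)) {a : ι → ℝ} {c : ℝ}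
    (ha : ∀ i ∈ s, 0 ≤ a i) (hc : ∑ i ∈ s, a i ≤ c) :
    #s * f (c / #s) ≤ ∑ i ∈ s, f (a i) := by
  rcases s.eq_empty_or_nonempty with rfl | hs
  · simp
  have hn : (0 : ℝ) < #s := by exact_mod_cast hs.card_pos
  have hmean : 0 ≤ (∑ i ∈ s, a i) / #s := div_nonneg (sum_nonneg ha) hn.le
  have hjensen : f ((∑ i ∈ s, a i) / #s) ≤ (∑ i ∈ s, f (a i)) / #s := by
    have := hconv.map_sum_le (t := s) (w := fun _ => (#s : ℝ)⁻¹) (p := a)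
      (fun _ _ => by positivity) (by simp [hn.ne']) ha
    simpa only [smul_eq_mul, inv_mul_eq_div, sum_div] using this
  have hmono : f (c / #s) ≤ f ((∑ i ∈ s, a i) / #s) :=
    hanti hmean (hmean.trans (by gcongr)) (by gcongr)
  rw [← le_div_iff₀' hn]
  exact hmono.trans hjensen

theorem direct_product_min
    {Ω : Type*} [Fintype Ω] (P : Ω → ℝ)
    (hP0 : ∀ ω, 0 ≤ P ω) (hP1 : ∑ ω, P ω = 1)
    {r b : ℕ}
    {𝒳 : Fin r → Type*} [∀ i, Fintype (𝒳 i)]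
    (X : ∀ i, Ω → 𝒳 i)
    (hindep : ∀ x : ∀ i, 𝒳 i,
      prOf P (fun ω => ∀ i, X i ω = x i) = ∏ i, prOf P (fun ω => X i ω = x i))
    (B : Ω → Fin (2 ^ b))
    (cost : Fin r → Ω → ℝ)
    (f : ℝ → ℝ) (hconv : ConvexOn ℝ (Set.Ici 0) f) (hanti : AntitoneOn f (Set.Ici 0))
    (hlb : ∀ (i : Fin r) (w : ((j : {j : Fin r // j < i}) → 𝒳 j.1) × Fin (2 ^ b)),
      0 < prOf P (fun ω => ((fun j : {j : Fin r // j < i} => X j.1 ω), B ω) = w) →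
      (∑ ω, (if ((fun j : {j : Fin r // j < i} => X j.1 ω), B ω) = w then P ω else 0) * cost i ω) /
          prOf P (fun ω => ((fun j : {j : Fin r // j < i} => X j.1 ω), B ω) = w)
        ≥ f (klBits
            (fun x : 𝒳 i =>
              prOf P (fun ω => X i ω = x ∧ ((fun j : {j : Fin r // j < i} => X j.1 ω), B ω) = w) /
                prOf P (fun ω => ((fun j : {j : Fin r // j < i} => X j.1 ω), B ω) = w))
            (fun x : 𝒳 i => prOf P (fun ω => X i ω = x)))) :
    ∑ ω, P ω * ∑ i, cost i ω ≥ (r : ℝ) * f ((b : ℝ) / (r : ℝ)) := by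
  set W := fun (i : Fin r) ω => ((fun j : {j : Fin r // j < i} => X j.1 ω), B ω)
  have hinfo : ∑ i, mutualInfo P (X i) (W i) ≤ b :=
    calc ∑ i, mutualInfo P (X i) (W i) ≤ entropy P B := sum_mutualInfo_le_entropy X B hP0 hindep
      _ ≤ Real.logb 2 (Fintype.card (Fin (2 ^ b))) := entropy_le_logb_card hP0 hP1 B
      _ = b := by simp [Real.logb_pow]
  calc (r : ℝ) * f (b / r) = #(univ : Finset (Fin r)) * f (b / #(univ : Finset (Fin r))) := by simp
    _ ≤ ∑ i, f (mutualInfo P (X i) (W i)) :=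
      card_mul_le_sum_of_convexOn_of_antitoneOn hconv hanti
        (fun i _ => mutualInfo_nonneg hP0 hP1 (X i) (W i)) hinfo
    _ ≤ ∑ i, ∑ ω, P ω * cost i ω :=
      sum_le_sum fun i _ => map_mutualInfo_le hP0 hP1 hconv (X i) (W i) (cost i) (hlb i)
    _ = ∑ ω, P ω * ∑ i, cost i ω := by simp only [mul_sum]; exact sum_comm
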